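/- Let (r,ρ) ∈ NC, i.e., 0 < r < 1 < ρ and r^k = ρ^ℓ implies k = ℓ = 0 for integers k, ℓ. Let L_{r,ρ} = {(x,y) ∈ [0,1]² : y = rx or y = ρx} and M_{r,ρ} the Mahavier product of L_{r,ρ} with shift map σ_{r,ρ}. Then (M_{r,ρ}, σ_{r,ρ}) has sensitive dependence on initial conditions. -/

import Mathlib

open Set

/-- The Mahavier product `M_{r,ρ}` of the relation `L_{r,ρ}`: sequences in `[0,1]`
where each next coordinate is `r` or `ρ` times the previous one. -/
def Mset (r ρ : ℝ) : Set (ℕ → ℝ) :=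
  {x | ∀ i : ℕ, x i ∈ Icc (0:ℝ) 1 ∧ (x (i + 1) = r * x i ∨ x (i + 1) = ρ * x i)}

/-- The shift map on sequences. -/
def shiftMap (x : ℕ → ℝ) : ℕ → ℝ := fun i => x (i + 1)

/-- The product metric `d(x,y) = max_k |y_k - x_k|/2^k` (indices starting at 1). -/
noncomputable def rho (x y : ℕ → ℝ) : ℝ :=
  ⨆ k : ℕ, |y k - x k| / 2 ^ (k + 1)

/-
Sensitivity comes from the freedom to continue a point of `M_{r,ρ}` in two very different
ways. From any `a ∈ (0,1]` the path `a, ra, r²a, …` tends to `0`, while the greedy path, which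
multiplies by `ρ` whenever that keeps it in `[0,1]` and by `r` otherwise, eventually never drops
below `r/ρ`. Splicing both continuations onto `x` after a long common prefix gives two points
close to `x` that are eventually `r/(2ρ)` apart, so one of them gets `r/(4ρ)` away from `x`. If
`x = 0` there is nothing to continue from, and the greedy path started at a tiny `a` serves instead.
-/

lemma shiftMap_iterate_apply (x : ℕ → ℝ) (n k : ℕ) : shiftMap^[n] x k = x (k + n) := by
  induction n generalizing x with
  | zero => rfl
  | succ n ih => rw [Function.iterate_succ_apply, ih]; rfl

section Metric

variable {x y : ℕ → ℝ}

lemma rho_bddAbove (hx : ∀ k, x k ∈ Icc (0:ℝ) 1) (hy : ∀ k, y k ∈ Icc (0:ℝ) 1) :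
    BddAbove (range fun k => |y k - x k| / 2 ^ (k + 1)) := by
  refine ⟨1, ?_⟩
  rintro _ ⟨k, rfl⟩
  rw [div_le_one (by positivity)]
  exact (abs_sub_le_of_nonneg_of_le (hy k).1 (hy k).2 (hx k).1 (hx k).2).trans
    (one_le_pow₀ (by norm_num))

lemma abs_sub_div_two_le_rho_shiftMap_iterate (hx : ∀ k, x k ∈ Icc (0:ℝ) 1)
    (hy : ∀ k, y k ∈ Icc (0:ℝ) 1) (n : ℕ) :
    |y n - x n| / 2 ≤ rho (shiftMap^[n] x) (shiftMap^[n] y) := by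
  have hbdd := rho_bddAbove (x := shiftMap^[n] x) (y := shiftMap^[n] y)
    (fun k => by rw [shiftMap_iterate_apply]; exact hx _)
    (fun k => by rw [shiftMap_iterate_apply]; exact hy _)
  simpa [rho, shiftMap_iterate_apply] using le_ciSup hbdd 0

lemma rho_le_max (hx : ∀ k, x k ∈ Icc (0:ℝ) 1) (hy : ∀ k, y k ∈ Icc (0:ℝ) 1) {η : ℝ} {N : ℕ}
    (h : ∀ k < N, |y k - x k| ≤ η) : rho x y ≤ max η ((1 / 2) ^ N) := by
  refine ciSup_le fun k => ?_
  have h2 : (1:ℝ) ≤ 2 ^ (k + 1) := one_le_pow₀ (by norm_num)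
  rcases lt_or_ge k N with hk | hk
  · exact (div_le_self (abs_nonneg _) h2).trans ((h k hk).trans (le_max_left _ _))
  · refine le_trans ?_ (le_max_right _ _)
    calc |y k - x k| / 2 ^ (k + 1) ≤ 1 / 2 ^ (k + 1) := by
          gcongr; exact abs_sub_le_of_nonneg_of_le (hy k).1 (hy k).2 (hx k).1 (hx k).2
      _ = (1 / 2) ^ (k + 1) := by rw [one_div_pow]
      _ ≤ (1 / 2) ^ N := pow_le_pow_of_le_one (by norm_num) (by norm_num) (by omega)

end Metric

section Paths

variable {r ρ a : ℝ} {x : ℕ → ℝ}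

lemma apply_eq_zero_of_mem_Mset (hx : x ∈ Mset r ρ) (h0 : x 0 = 0) (k : ℕ) : x k = 0 := by
  induction k with
  | zero => exact h0
  | succ k ih => rcases (hx k).2 with h | h <;> rw [h, ih, mul_zero]

lemma apply_pos_of_mem_Mset (hr : 0 < r) (hρ : 0 < ρ) (hx : x ∈ Mset r ρ) (h0 : 0 < x 0)
    (k : ℕ) : 0 < x k := by
  induction k with
  | zero => exact h0
  | succ k ih => rcases (hx k).2 with h | h <;> rw [h] <;> positivity

lemma apply_le_pow_mul_of_mem_Mset (hρ : 0 ≤ ρ) (hrρ : r ≤ ρ) (hx : x ∈ Mset r ρ) (k : ℕ) :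
    x k ≤ ρ ^ k * x 0 := by
  induction k with
  | zero => simp
  | succ k ih =>
    have hxk := (hx k).1.1
    calc x (k + 1) ≤ ρ * x k := by
          rcases (hx k).2 with h | h <;> rw [h]; exact mul_le_mul_of_nonneg_right hrρ hxk
      _ ≤ ρ * (ρ ^ k * x 0) := mul_le_mul_of_nonneg_left ih hρ
      _ = ρ ^ (k + 1) * x 0 := by ring

lemma geom_mem_Mset (hr0 : 0 ≤ r) (hr1 : r ≤ 1) (ha : a ∈ Icc (0:ℝ) 1) :
    (fun k => r ^ k * a) ∈ Mset r ρ := fun i =>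
  ⟨⟨by have := ha.1; positivity, mul_le_one₀ (pow_le_one₀ hr0 hr1) ha.1 ha.2⟩,
    Or.inl (by ring)⟩

noncomputable def greedyPath (r ρ a : ℝ) : ℕ → ℝ
  | 0 => a
  | k + 1 => if ρ * greedyPath r ρ a k ≤ 1 then ρ * greedyPath r ρ a k else r * greedyPath r ρ a k

lemma greedyPath_mem_Mset (hr0 : 0 ≤ r) (hr1 : r ≤ 1) (hρ : 0 ≤ ρ) (ha : a ∈ Icc (0:ℝ) 1) :
    greedyPath r ρ a ∈ Mset r ρ := by
  have hmem : ∀ k, greedyPath r ρ a k ∈ Icc (0:ℝ) 1 := by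
    intro k
    induction k with
    | zero => exact ha
    | succ k ih =>
      simp only [greedyPath]
      split_ifs with h
      · exact ⟨mul_nonneg hρ ih.1, h⟩
      · exact ⟨mul_nonneg hr0 ih.1, mul_le_one₀ hr1 ih.1 ih.2⟩
  refine fun k => ⟨hmem k, ?_⟩
  simp only [greedyPath]
  split_ifs <;> simp

lemma min_le_greedyPath (hr : 0 ≤ r) (hρ : 1 ≤ ρ) (k : ℕ) :
    min (ρ ^ k * a) (r / ρ) ≤ greedyPath r ρ a k := by
  have hρ0 : 0 < ρ := by linarith
  induction k with
  | zero => simp [greedyPath]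
  | succ k ih =>
    simp only [greedyPath]
    split_ifs with h
    · calc min (ρ ^ (k + 1) * a) (r / ρ) ≤ min (ρ ^ (k + 1) * a) r :=
            min_le_min_left _ (div_le_self hr hρ)
        _ = ρ * min (ρ ^ k * a) (r / ρ) := by
            rw [mul_min_of_nonneg _ _ hρ0.le, mul_div_cancel₀ _ hρ0.ne', pow_succ]; ring_nf
        _ ≤ ρ * greedyPath r ρ a k := mul_le_mul_of_nonneg_left ih hρ0.le
    · refine (min_le_right _ _).trans ?_
      rw [div_le_iff₀ hρ0, mul_assoc]
      exact le_mul_of_one_le_right hr (by rw [mul_comm]; linarith)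

noncomputable def splice (x : ℕ → ℝ) (N : ℕ) (z : ℕ → ℝ) (k : ℕ) : ℝ :=
  if k ≤ N then x k else z (k - N)

lemma splice_apply_of_le {z : ℕ → ℝ} {N k : ℕ} (hz : z 0 = x N) (hk : N ≤ k) :
    splice x N z k = z (k - N) := by
  unfold splice
  split_ifs with h
  · rw [le_antisymm h hk, Nat.sub_self, hz]
  · rfl

lemma splice_mem_Mset {z : ℕ → ℝ} {N : ℕ} (hx : x ∈ Mset r ρ) (hz : z ∈ Mset r ρ)
    (hzx : z 0 = x N) : splice x N z ∈ Mset r ρ := by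
  intro i
  rcases lt_or_ge i N with hi | hi
  · simp only [splice, if_pos hi.le, if_pos (show i + 1 ≤ N by omega)]
    exact hx i
  · rw [splice_apply_of_le hzx hi, splice_apply_of_le hzx (by omega),
      show i + 1 - N = i - N + 1 by omega]
    exact hz _

end Paths

section Sensitivity

variable {r ρ : ℝ}

lemma eventually_div_le_greedyPath (hr0 : 0 < r) (hρ : 1 < ρ) {a : ℝ} (ha : 0 < a) :
    ∀ᶠ n in Filter.atTop, r / ρ ≤ greedyPath r ρ a n := by
  have hgrow : Filter.Tendsto (fun n => ρ ^ n * a) Filter.atTop Filter.atTop :=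
    (tendsto_pow_atTop_atTop_of_one_lt hρ).atTop_mul_const ha
  filter_upwards [hgrow.eventually_ge_atTop (r / ρ)] with n hn
  exact (le_min hn le_rfl).trans (min_le_greedyPath hr0.le hρ.le n)

lemma exists_agree_far_of_pos (hr0 : 0 < r) (hr1 : r < 1) (hρ : 1 < ρ) {x : ℕ → ℝ}
    (hx : x ∈ Mset r ρ) {N : ℕ} (hxN : 0 < x N) :
    ∃ y ∈ Mset r ρ, (∀ k ≤ N, y k = x k) ∧ ∃ n, N < n ∧ r / (4 * ρ) < |y n - x n| := by
  set a := x N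
  have ha : a ∈ Icc (0:ℝ) 1 := (hx N).1
  have hdecay : ∀ᶠ n in Filter.atTop, r ^ n < r / (2 * ρ) :=
    (tendsto_pow_atTop_nhds_zero_of_lt_one hr0.le hr1).eventually_lt_const (by positivity)
  obtain ⟨n, hfar, hsmall, hn⟩ := ((eventually_div_le_greedyPath hr0 hρ hxN).and
    (hdecay.and (Filter.eventually_ge_atTop 1))).exists
  set g := greedyPath r ρ a
  set d : ℕ → ℝ := fun k => r ^ k * a
  have hg : g ∈ Mset r ρ := greedyPath_mem_Mset hr0.le hr1.le (by linarith) ha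
  have hd : d ∈ Mset r ρ := geom_mem_Mset hr0.le hr1.le ha
  have hgap : r / (2 * ρ) < |g n - x (N + n)| + |d n - x (N + n)| := by
    have hdn : d n ≤ r ^ n := mul_le_of_le_one_right (by positivity) ha.2
    have : r / ρ = 2 * (r / (2 * ρ)) := by field_simp
    calc r / (2 * ρ) < g n - d n := by linarith
      _ ≤ |g n - d n| := le_abs_self _
      _ ≤ |g n - x (N + n)| + |d n - x (N + n)| := by
        rw [abs_sub_comm (d n)]; exact abs_sub_le _ _ _
  have hsplice : ∀ z ∈ Mset r ρ, z 0 = a → r / (4 * ρ) < |z n - x (N + n)| →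
      ∃ y ∈ Mset r ρ, (∀ k ≤ N, y k = x k) ∧ ∃ n, N < n ∧ r / (4 * ρ) < |y n - x n| :=
    fun z hz hz0 hfar => ⟨splice x N z, splice_mem_Mset hx hz hz0, fun k hk => if_pos hk, N + n,
      by omega, by rwa [splice_apply_of_le hz0 (by omega), Nat.add_sub_cancel_left]⟩
  rcases lt_or_ge (r / (4 * ρ)) |g n - x (N + n)| with hgfar | hgnear
  · exact hsplice g hg rfl hgfar
  · refine hsplice d hd (by simp [d]) ?_
    have : r / (2 * ρ) = 2 * (r / (4 * ρ)) := by field_simp; ring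
    linarith

lemma exists_near_far_of_eq_zero (hr0 : 0 < r) (hr1 : r < 1) (hρ : 1 < ρ) {x : ℕ → ℝ}
    (hx : x ∈ Mset r ρ) (hx0 : x 0 = 0) {η : ℝ} (hη : 0 < η) (hη1 : η ≤ 1) (N : ℕ) :
    ∃ y ∈ Mset r ρ, (∀ k < N, |y k - x k| ≤ η) ∧ ∃ n, 0 < n ∧ r / (4 * ρ) < |y n - x n| := by
  have hρN : 1 ≤ ρ ^ N := one_le_pow₀ hρ.le
  set a := η / ρ ^ N
  have ha : 0 < a := by positivity
  have ha1 : a ≤ 1 := (div_le_self hη.le hρN).trans hη1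
  set y := greedyPath r ρ a
  have hy : y ∈ Mset r ρ := greedyPath_mem_Mset hr0.le hr1.le (by linarith) ⟨ha.le, ha1⟩
  obtain ⟨n, hfar, hn⟩ :=
    ((eventually_div_le_greedyPath hr0 hρ ha).and (Filter.eventually_gt_atTop 0)).exists
  refine ⟨y, hy, fun k hk => ?_, n, hn, ?_⟩ <;>
    rw [apply_eq_zero_of_mem_Mset hx hx0, sub_zero, abs_of_nonneg (hy _).1.1]
  · calc y k ≤ ρ ^ k * a := apply_le_pow_mul_of_mem_Mset (by linarith) (by linarith) hy k
      _ ≤ ρ ^ N * a := mul_le_mul_of_nonneg_right (pow_le_pow_right₀ hρ.le hk.le) ha.le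
      _ = η := mul_div_cancel₀ _ (by positivity)
  · calc r / (4 * ρ) < r / ρ := by gcongr; linarith
      _ ≤ y n := hfar

end Sensitivity

theorem mahavier_lelek_sensitive_general
    (r ρ : ℝ) (hr0 : 0 < r) (hr1 : r < 1) (hρ : 1 < ρ) :
    ∃ ε > (0:ℝ), ∀ x ∈ Mset r ρ, ∀ δ > (0:ℝ), ∃ y ∈ Mset r ρ,
      rho x y < δ ∧ ∃ n : ℕ, 0 < n ∧
        rho (shiftMap^[n] x) (shiftMap^[n] y) > ε := by
  refine ⟨r / (8 * ρ), by positivity, fun x hx δ hδ => ?_⟩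
  obtain ⟨N, hN⟩ := exists_pow_lt_of_lt_one hδ (by norm_num : (1:ℝ) / 2 < 1)
  obtain ⟨y, hy, hnear, n, hn, hfar⟩ : ∃ y ∈ Mset r ρ, (∀ k < N, |y k - x k| ≤ (1 / 2) ^ N) ∧
      ∃ n, 0 < n ∧ r / (4 * ρ) < |y n - x n| := by
    rcases (hx 0).1.1.eq_or_lt with hx0 | hx0
    · exact exists_near_far_of_eq_zero hr0 hr1 hρ hx hx0.symm (by positivity)
        (pow_le_one₀ (by norm_num) (by norm_num)) N
    · obtain ⟨y, hy, hagree, n, hn, hfar⟩ := exists_agree_far_of_pos hr0 hr1 hρ hx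
        (apply_pos_of_mem_Mset hr0 (by linarith) hx hx0 N)
      exact ⟨y, hy, fun k hk => by rw [hagree k hk.le, sub_self, abs_zero]; positivity,
        n, by omega, hfar⟩
  have hIcc : ∀ z ∈ Mset r ρ, ∀ k, z k ∈ Icc (0:ℝ) 1 := fun z hz k => (hz k).1
  refine ⟨y, hy, (rho_le_max (hIcc x hx) (hIcc y hy) hnear).trans_lt (by simpa using hN), n, hn, ?_⟩
  calc r / (8 * ρ) < |y n - x n| / 2 := by
        have : r / (4 * ρ) = 2 * (r / (8 * ρ)) := by field_simp; ring
        linarith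
    _ ≤ _ := abs_sub_div_two_le_rho_shiftMap_iterate (hIcc x hx) (hIcc y hy) n

/-- If `(r,ρ) ∈ NC` (i.e. `0 < r < 1 < ρ` and `r^k = ρ^ℓ` only for `k = ℓ = 0`),
then `(M_{r,ρ}, σ_{r,ρ})` has sensitive dependence on initial conditions. -/
theorem mahavier_lelek_sensitive
    (r ρ : ℝ) (hr0 : 0 < r) (hr1 : r < 1) (hρ : 1 < ρ)
    (hNC : ∀ k ℓ : ℤ, r ^ k = ρ ^ ℓ → k = 0 ∧ ℓ = 0) :
    ∃ ε > (0:ℝ), ∀ x ∈ Mset r ρ, ∀ δ > (0:ℝ), ∃ y ∈ Mset r ρ,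
      rho x y < δ ∧ ∃ n : ℕ, 0 < n ∧
        rho (shiftMap^[n] x) (shiftMap^[n] y) > ε :=
  mahavier_lelek_sensitive_general r ρ hr0 hr1 hρ
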